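/- arXiv:2001.07242 — 8 statements merged into one kernel-verified Lean document; each statement's English description precedes it below -/
import Mathlib

section
/- If every finite oriented graph has a vertex v with |N⁺⁺(v)| ≥ |N⁺(v)|, then every finite oriented graph with any non-negative real vertex weight function ω has a vertex v with ω(N⁺⁺(v)) ≥ ω(N⁺(v)). -/
open Finset
open scoped Classical
noncomputable section

/-- Out-neighbourhood of `v` in the digraph/relation `A`. -/
def outs {V : Type} [Fintype V] (A : V → V → Prop) (v : V) : Finset V :=
  Finset.univ.filter (fun u => A v u)

/-- In-neighbourhood of `v` in the digraph/relation `A`. -/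
def ins {V : Type} [Fintype V] (A : V → V → Prop) (v : V) : Finset V :=
  Finset.univ.filter (fun u => A u v)

/-- Second out-neighbourhood: `(⋃_{u ∈ N⁺(v)} N⁺(u)) \ N⁺(v)`. -/
def souts {V : Type} [Fintype V] (A : V → V → Prop) (v : V) : Finset V :=
  (Finset.univ.filter (fun w => ∃ u, A v u ∧ A u w)) \ outs A v

/-- Relational product `AB`. -/
def rprod {V : Type} (A B : V → V → Prop) : V → V → Prop :=
  fun u v => ∃ w, A u w ∧ B w v

/-- Transpose of a relation. -/
def tr {V : Type} (A : V → V → Prop) : V → V → Prop := fun u v => A v u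

/-- Weight of a finite set of vertices. -/
def wt {V : Type} {M : Type} [AddCommMonoid M] (ω : V → M) (S : Finset V) : M :=
  ∑ x ∈ S, ω x

lemma card_filter_sigma {V : Type} [Fintype V] (c : V → ℕ) (P : V → Prop) :
    (Finset.univ.filter (fun y : Σ v : V, Fin (c v) => P y.1)).card
      = wt c (Finset.univ.filter P) := by
  classical
  rw [Finset.card_filter, ← Finset.univ_sigma_univ, Finset.sum_sigma]
  simp only [Finset.sum_const, smul_eq_mul, mul_one, Finset.card_univ, Fintype.card_fin, wt, Finset.sum_filter]
  refine Finset.sum_congr rfl fun x _ => ?_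
  by_cases hx : P x <;> simp [hx]

lemma aux_nat
    (h : ∀ (V : Type) [Fintype V] [Nonempty V] (A : V → V → Prop),
        (∀ u v, A u v → ¬ A v u) →
        ∃ v, (souts A v).card ≥ (outs A v).card)
    (V : Type) [Fintype V] [Nonempty V] (A : V → V → Prop)
    (hA : ∀ u v, A u v → ¬ A v u) (c : V → ℕ) :
    ∃ v, wt c (outs A v) ≤ wt c (souts A v) := by
  by_cases hc : ∀ x, c x = 0
  · exact ⟨Classical.arbitrary V, by simp [wt, hc]⟩
  push_neg at hc
  obtain ⟨v₀, hv₀⟩ := hc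
  haveI : Nonempty (Σ v : V, Fin (c v)) := ⟨⟨v₀, ⟨0, Nat.pos_of_ne_zero hv₀⟩⟩⟩
  obtain ⟨x, hx⟩ := h (Σ v : V, Fin (c v)) (fun x y => A x.1 y.1)
    (fun u v huv => hA _ _ huv)
  refine ⟨x.1, ?_⟩
  set A' : (Σ v : V, Fin (c v)) → (Σ v : V, Fin (c v)) → Prop := fun x y => A x.1 y.1 with hA'
  -- outs card
  have houts : (outs A' x).card = wt c (outs A x.1) := card_filter_sigma c (fun u => A x.1 u)
  -- souts : subset
  have hsouts : (souts A' x).card ≤ wt c (souts A x.1) := by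
    have h1 : souts A' x = Finset.univ.filter
        (fun y : Σ v : V, Fin (c v) =>
          ((∃ u, (A x.1 u ∧ 0 < c u) ∧ A u y.1) ∧ ¬ A x.1 y.1)) := by
      ext y
      simp only [souts, outs, Finset.mem_sdiff, Finset.mem_filter, Finset.mem_univ, true_and]
      constructor
      · rintro ⟨⟨u, h1, h2⟩, h3⟩
        exact ⟨⟨u.1, ⟨h1, u.2.pos⟩, h2⟩, h3⟩
      · rintro ⟨⟨u, ⟨h1, hu⟩, h2⟩, h3⟩
        exact ⟨⟨⟨u, ⟨0, hu⟩⟩, h1, h2⟩, h3⟩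
    rw [h1]
    have h2 : (Finset.univ.filter
        (fun y : Σ v : V, Fin (c v) =>
          ((∃ u, (A x.1 u ∧ 0 < c u) ∧ A u y.1) ∧ ¬ A x.1 y.1))).card
        = wt c (Finset.univ.filter (fun w => (∃ u, (A x.1 u ∧ 0 < c u) ∧ A u w) ∧ ¬ A x.1 w)) := by
      convert card_filter_sigma c (fun w => (∃ u, (A x.1 u ∧ 0 < c u) ∧ A u w) ∧ ¬ A x.1 w) using 2 <;>
        (ext y; simp only [Finset.mem_filter])
    rw [h2]
    apply Finset.sum_le_sum_of_subset
    intro w hw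
    simp only [souts, outs, Finset.mem_sdiff, Finset.mem_filter, Finset.mem_univ, true_and] at hw ⊢
    obtain ⟨⟨u, ⟨h1, _⟩, h2⟩, h3⟩ := hw
    exact ⟨⟨u, h1, h2⟩, h3⟩
  calc wt c (outs A x.1) = (outs A' x).card := houts.symm
    _ ≤ (souts A' x).card := hx
    _ ≤ wt c (souts A x.1) := hsouts


/-- If every finite oriented graph has a vertex `v` with `|N⁺⁺(v)| ≥ |N⁺(v)|`, then every
finite oriented graph with any non-negative real vertex weights has a vertex `v` with
`ω(N⁺⁺(v)) ≥ ω(N⁺(v))`. -/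
theorem snc_implies_weighted_snc
    (h : ∀ (V : Type) [Fintype V] [Nonempty V] (A : V → V → Prop),
        (∀ u v, A u v → ¬ A v u) →
        ∃ v, (souts A v).card ≥ (outs A v).card) :
    ∀ (V : Type) [Fintype V] [Nonempty V] (A : V → V → Prop),
        (∀ u v, A u v → ¬ A v u) →
        ∀ ω : V → ℝ, (∀ v, 0 ≤ ω v) →
        ∃ v, wt ω (souts A v) ≥ wt ω (outs A v) := by
  intro V _ _ A hA ω hω
  -- for each n, nat-weight version with weights ⌊(n+1)·ω⌋₊
  have key : ∀ n : ℕ, ∃ v, wt (fun x => ⌊(n+1 : ℝ) * ω x⌋₊) (outs A v)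
      ≤ wt (fun x => ⌊(n+1 : ℝ) * ω x⌋₊) (souts A v) := fun n =>
    aux_nat h V A hA _
  choose f hf using key
  obtain ⟨v, hv⟩ := Finite.exists_infinite_fiber f
  refine ⟨v, ?_⟩
  rw [ge_iff_le, ← sub_nonneg]
  have hv' : (f ⁻¹' {v}).Infinite := Set.infinite_coe_iff.mp hv
  by_contra hneg
  push_neg at hneg
  set ε : ℝ := wt ω (outs A v) - wt ω (souts A v) with hε
  have hεpos : 0 < ε := by linarith
  obtain ⟨N, hN⟩ := exists_nat_gt ((Fintype.card V : ℝ) / ε)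
  obtain ⟨n, hn, hnN⟩ := hv'.exists_gt N
  have hfn : f n = v := hn
  have h1 := hf n
  rw [hfn] at h1
  -- bounds
  have hb1 : (wt (fun x => ⌊(n+1 : ℝ) * ω x⌋₊) (souts A v) : ℝ) ≤ (n+1 : ℝ) * wt ω (souts A v) := by
    simp only [wt, Finset.mul_sum]
    exact Finset.sum_le_sum fun x _ => Nat.floor_le (mul_nonneg (by positivity) (hω x))
  have hb2 : (n+1 : ℝ) * wt ω (outs A v) - Fintype.card V
      ≤ (wt (fun x => ⌊(n+1 : ℝ) * ω x⌋₊) (outs A v) : ℝ) := by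
    simp only [wt, Finset.mul_sum]
    have : ∀ x ∈ outs A v, (n+1 : ℝ) * ω x - 1 ≤ (⌊(n+1 : ℝ) * ω x⌋₊ : ℝ) :=
      fun x _ => le_of_lt (Nat.sub_one_lt_floor _)
    calc (∑ x ∈ outs A v, (n+1 : ℝ) * ω x) - Fintype.card V
        ≤ (∑ x ∈ outs A v, (n+1 : ℝ) * ω x) - (outs A v).card := by
          have : ((outs A v).card : ℝ) ≤ Fintype.card V := by
            exact_mod_cast Finset.card_le_card (Finset.subset_univ _)
          linarith
      _ = ∑ x ∈ outs A v, ((n+1 : ℝ) * ω x - 1) := by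
          rw [Finset.sum_sub_distrib]; simp
      _ ≤ ∑ x ∈ outs A v, (⌊(n+1 : ℝ) * ω x⌋₊ : ℝ) := Finset.sum_le_sum this
  have h1' : (wt (fun x => ⌊(n+1 : ℝ) * ω x⌋₊) (outs A v) : ℝ)
      ≤ (wt (fun x => ⌊(n+1 : ℝ) * ω x⌋₊) (souts A v) : ℝ) := by
    simp only [wt] at h1 ⊢
    exact_mod_cast h1
  have hmain : (n+1 : ℝ) * wt ω (outs A v) - Fintype.card V ≤ (n+1 : ℝ) * wt ω (souts A v) := by
    linarith
  -- derive contradiction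
  have hnpos : (0 : ℝ) < n + 1 := by positivity
  have hcard : (Fintype.card V : ℝ) < (n+1) * ε := by
    have hNn : (N : ℝ) ≤ n := by exact_mod_cast hnN.le
    have : (Fintype.card V : ℝ) / ε < n + 1 := by linarith
    calc (Fintype.card V : ℝ) = (Fintype.card V : ℝ) / ε * ε := by field_simp
      _ < (n+1) * ε := by exact mul_lt_mul_of_pos_right this hεpos
  have : (n+1 : ℝ) * wt ω (outs A v) - (n+1) * wt ω (souts A v) = (n+1) * ε := by rw [hε]; ring
  linarith
end
end

section
/- There exist directed graphs A, B on a 6-element vertex set V with A ∩ Bᵀ = I and A ⊆ B, and a non-negative weight function ω, such that for every vertex v, ω(AB(v)) < ω(A(v)) + ω(B(v)) − ω(v). Concretely, take V = {1,…,6}, weights (7,3,11,3,3,9), A given by out-sets A(1)={1,2,5,6}, A(2)={2,3}, A(3)={1,3,4,5}, A(4)={1,4}, A(5)={2,5,6}, A(6)={2,3,6}, and B given by B(1)={1,2,5,6}, B(2)={2,3,4}, B(3)={1,3,4,5}, B(4)={1,4,6}, B(5)={2,4,5,6}, B(6)={2,3,6}. -/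
open Finset
open scoped Classical
noncomputable section

/-- Out-sets of the first counterexample graph `A` (0-indexed from the paper's table). -/
def aOut4 : Fin 6 → List (Fin 6)
  | 0 => [0,1,4,5] | 1 => [1,2] | 2 => [0,2,3,4] | 3 => [0,3] | 4 => [1,4,5] | 5 => [1,2,5]

/-- Out-sets of the first counterexample graph `B`. -/
def bOut4 : Fin 6 → List (Fin 6)
  | 0 => [0,1,4,5] | 1 => [1,2,3] | 2 => [0,2,3,4] | 3 => [0,3,5] | 4 => [1,3,4,5] | 5 => [1,2,5]

/-- Weights of the first counterexample. -/
def w4 : Fin 6 → ℝ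
  | 0 => 7 | 1 => 3 | 2 => 11 | 3 => 3 | 4 => 3 | 5 => 9

section Relations

variable {V : Type} [Fintype V]

theorem outs_rprod [DecidableEq V] (A B : V → V → Prop) (v : V) :
    outs (rprod A B) v = (outs A v).biUnion (outs B) := by
  ext u
  simp only [outs, mem_filter, mem_univ, true_and, mem_biUnion]
  rfl

theorem outs_mem_list [DecidableEq V] (L : V → List V) :
    outs (fun u w => w ∈ L u) = fun v => (L v).toFinset := by
  ext; simp [outs]

end Relations

theorem wt_natCast {V M : Type} [AddCommMonoidWithOne M] (ω : V → ℕ) (S : Finset V) :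
    wt (fun v => (ω v : M)) S = ((wt ω S : ℕ) : M) := by
  simp [wt]

-- Over ℕ the weight inequality becomes a kernel-decidable statement.
def w4Nat : Fin 6 → ℕ
  | 0 => 7 | 1 => 3 | 2 => 11 | 3 => 3 | 4 => 3 | 5 => 9

theorem w4_eq_natCast : w4 = fun v => (w4Nat v : ℝ) := by
  funext v; fin_cases v <;> rfl

theorem w4Nat_weight_gap (v : Fin 6) :
    wt w4Nat ((aOut4 v).toFinset.biUnion fun u => (bOut4 u).toFinset) + w4Nat v <
      wt w4Nat (aOut4 v).toFinset + wt w4Nat (bOut4 v).toFinset := by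
  revert v; decide

/-- The concrete 6-vertex weighted counterexample with `A ⊆ B`: `A ∩ Bᵀ = I`, `A ⊆ B`,
the weights are non-negative, and every vertex `v` has
`ω(AB(v)) < ω(A(v)) + ω(B(v)) − ω(v)`. -/
theorem counterexample_A_subset_B :
    ∃ (A B : Fin 6 → Fin 6 → Prop) (ω : Fin 6 → ℝ),
      (∀ u v, A u v ↔ v ∈ aOut4 u) ∧ (∀ u v, B u v ↔ v ∈ bOut4 u) ∧ ω = w4 ∧
      (∀ v, 0 ≤ ω v) ∧
      (∀ u v, (A u v ∧ B v u) ↔ u = v) ∧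
      (∀ u v, A u v → B u v) ∧
      (∀ v, wt ω (outs (rprod A B) v) < wt ω (outs A v) + wt ω (outs B v) - ω v) := by
  refine ⟨fun u v => v ∈ aOut4 u, fun u v => v ∈ bOut4 u, w4,
    fun _ _ => Iff.rfl, fun _ _ => Iff.rfl, rfl, ?_, by decide, by decide, ?_⟩
  · intro v
    rw [w4_eq_natCast]
    positivity
  · intro v
    rw [outs_rprod, outs_mem_list, outs_mem_list, w4_eq_natCast, wt_natCast, wt_natCast,
      wt_natCast, lt_sub_iff_add_lt]
    beta_reduce
    exact_mod_cast w4Nat_weight_gap v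
end
end

section
/- Let A, B be directed graphs on a vertex set V with A ∩ Bᵀ = I. Define A' = A ∩ B and B' = A ∪ B. Then A' ∩ B'ᵀ = I, A' ⊆ B', and for every vertex v, A'B'(v) ∪ B'A'(v) ⊆ AB(v) ∪ BA(v), |A'(v)| + |B'(v)| = |A(v)| + |B(v)|. Consequently, if the conjecture '∃v with |(A'B' ∪ B'A')(v)| ≥ |A'(v)| + |B'(v)| − 1' holds, then ∃v with |(AB ∪ BA)(v)| ≥ |A(v)| + |B(v)| − 1. -/
/-! Passing from `(A, B)` to `(A ∩ B, A ∪ B)` keeps the sum of out-degrees at every vertex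
(inclusion–exclusion), while a two-step walk alternating between `A ∩ B` and `A ∪ B` is always
an `AB`- or a `BA`-walk, so `(A'B' ∪ B'A')(v) ⊆ (AB ∪ BA)(v)`. Hence the lower bound of the
conjecture transfers from the new pair to the old one. -/

open Finset
open scoped Classical
noncomputable section

section Relations

variable {V : Type} (A B : V → V → Prop)

theorem and_and_or_swap_iff_eq (h : ∀ u v, (A u v ∧ B v u) ↔ u = v) (u v : V) :
    ((A u v ∧ B u v) ∧ (A v u ∨ B v u)) ↔ u = v := by
  constructor
  · rintro ⟨⟨hA, hB⟩, hA' | hB'⟩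
    · exact ((h v u).mp ⟨hA', hB⟩).symm
    · exact (h u v).mp ⟨hA, hB'⟩
  · rintro rfl
    obtain ⟨hA, hB⟩ := (h u u).mpr rfl
    exact ⟨⟨hA, hB⟩, Or.inl hA⟩

theorem rprod_and_or_imp {u w : V}
    (h : rprod (fun p q => A p q ∧ B p q) (fun p q => A p q ∨ B p q) u w) :
    rprod A B u w ∨ rprod B A u w := by
  obtain ⟨x, ⟨hA, hB⟩, hA' | hB'⟩ := h
  · exact Or.inr ⟨x, hB, hA'⟩
  · exact Or.inl ⟨x, hA, hB'⟩

theorem rprod_or_and_imp {u w : V}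
    (h : rprod (fun p q => A p q ∨ B p q) (fun p q => A p q ∧ B p q) u w) :
    rprod A B u w ∨ rprod B A u w := by
  obtain ⟨x, hA | hB, hA', hB'⟩ := h
  · exact Or.inl ⟨x, hA, hB'⟩
  · exact Or.inr ⟨x, hB, hA'⟩

variable [Fintype V]

theorem outs_mono {R S : V → V → Prop} (h : ∀ u w, R u w → S u w) (v : V) :
    outs R v ⊆ outs S v := by
  intro w hw
  simp only [outs, mem_filter, mem_univ, true_and] at hw ⊢
  exact h v w hw

theorem outs_and (v : V) : outs (fun u w => A u w ∧ B u w) v = outs A v ∩ outs B v := by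
  ext w
  simp [outs]

theorem outs_or (v : V) : outs (fun u w => A u w ∨ B u w) v = outs A v ∪ outs B v := by
  ext w
  simp [outs]

theorem card_outs_and_add_card_outs_or (v : V) :
    (outs (fun u w => A u w ∧ B u w) v).card + (outs (fun u w => A u w ∨ B u w) v).card
      = (outs A v).card + (outs B v).card := by
  rw [outs_and, outs_or, card_inter_add_card_union]

end Relations

/-- Reduction to the case `A ⊆ B`: with `A' = A ∩ B`, `B' = A ∪ B`, we have
`A' ∩ B'ᵀ = I`, `A' ⊆ B'`, `(A'B' ∪ B'A')(v) ⊆ (AB ∪ BA)(v)` and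
`|A'(v)| + |B'(v)| = |A(v)| + |B(v)|` for every `v`; consequently the conjecture for
`(A', B')` implies it for `(A, B)`. -/
theorem reduction_to_subset_case
    {V : Type} [Fintype V] (A B : V → V → Prop)
    (h1 : ∀ u v, (A u v ∧ B v u) ↔ u = v) :
    (∀ u v, ((fun u v => A u v ∧ B u v) u v ∧ (fun u v => A u v ∨ B u v) v u) ↔ u = v) ∧
    (∀ u v, (A u v ∧ B u v) → (A u v ∨ B u v)) ∧
    (∀ v, outs (fun u w =>
          rprod (fun p q => A p q ∧ B p q) (fun p q => A p q ∨ B p q) u w ∨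
          rprod (fun p q => A p q ∨ B p q) (fun p q => A p q ∧ B p q) u w) v ⊆
        outs (fun u w => rprod A B u w ∨ rprod B A u w) v) ∧
    (∀ v, (outs (fun u w => A u w ∧ B u w) v).card + (outs (fun u w => A u w ∨ B u w) v).card
        = (outs A v).card + (outs B v).card) ∧
    ((∃ v, (outs (fun u w =>
          rprod (fun p q => A p q ∧ B p q) (fun p q => A p q ∨ B p q) u w ∨
          rprod (fun p q => A p q ∨ B p q) (fun p q => A p q ∧ B p q) u w) v).card ≥
        (outs (fun u w => A u w ∧ B u w) v).card +
        (outs (fun u w => A u w ∨ B u w) v).card - 1) →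
      ∃ v, (outs (fun u w => rprod A B u w ∨ rprod B A u w) v).card ≥
        (outs A v).card + (outs B v).card - 1) := by
  have hprod : ∀ v, outs (fun u w =>
      rprod (fun p q => A p q ∧ B p q) (fun p q => A p q ∨ B p q) u w ∨
      rprod (fun p q => A p q ∨ B p q) (fun p q => A p q ∧ B p q) u w) v ⊆
      outs (fun u w => rprod A B u w ∨ rprod B A u w) v :=
    outs_mono fun _ _ h => h.elim (rprod_and_or_imp A B) (rprod_or_and_imp A B)
  refine ⟨and_and_or_swap_iff_eq A B h1, fun _ _ h => Or.inl h.1, hprod,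
    card_outs_and_add_card_outs_or A B, ?_⟩
  rintro ⟨v, hv⟩
  refine ⟨v, ?_⟩
  calc (outs A v).card + (outs B v).card - 1
      = (outs (fun u w => A u w ∧ B u w) v).card
          + (outs (fun u w => A u w ∨ B u w) v).card - 1 := by
        rw [card_outs_and_add_card_outs_or]
    _ ≤ _ := hv
    _ ≤ _ := card_le_card (hprod v)
end
end

section
/- Let A, B be directed graphs on a finite vertex set V such that A ∩ Bᵀ = I and A ∪ Bᵀ = V × V. Then for any weight function ω : V → ℝ≥0, there exists a vertex v such that ω((AB ∪ BA)(v)) ≥ ω(A(v)) + ω(B(v)) − ω(v). -/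
open Finset
open scoped Classical
noncomputable section

/-!
Weighted median orders (Havet–Thomassé). Order the vertices of positive weight so as to
maximise the forward weight `∑ ω(mᵢ) ω(mⱼ)` over the arcs `mᵢ → mⱼ` of `A` with `i < j`. Then
the last vertex `x` satisfies `ω(A(x)) + ω(S(x)) ≤ ω(Aᵀ(x))`, where the shadow `S(x)` consists
of the `w ∉ A(x)` with `A(x) ⊆ A(w)` and `Aᵀ(w) ⊆ Aᵀ(x)`. (The exchange argument divides by
`ω(w)`, hence the restriction to positive weights; leaving out the other vertices only enlarges
the shadow.) Under the hypotheses on `B`, `S(x)` is the complement of `(AB ∪ BA)(x)` and `B(x)`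
is the complement of `Aᵀ(x)` together with `x`, so this is the claimed inequality.
-/

namespace WeightedMedianOrder

variable {V : Type} (A : V → V → Prop) (ω : V → ℝ)

def arcWeight (a b : V) : ℝ := if A a b then ω a * ω b else 0

def forwardWeight : List V → ℝ
  | [] => 0
  | a :: l => (l.map (arcWeight A ω a)).sum + forwardWeight l

def IsMedianOrder (m : List V) : Prop :=
  ∀ m', m'.Perm m → forwardWeight A ω m' ≤ forwardWeight A ω m

def score (x u : V) : ℝ := (if A x u then ω u else 0) - if A u x then ω u else 0

def Shadow (s : Set V) (x w : V) : Prop :=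
  ¬ A x w ∧ (∀ u ∈ s, A x u → A w u) ∧ ∀ u ∈ s, A u w → A u x

variable {A ω}

theorem forwardWeight_append (P R : List V) :
    forwardWeight A ω (P ++ R) =
      forwardWeight A ω P + (P.map fun p => (R.map (arcWeight A ω p)).sum).sum +
        forwardWeight A ω R := by
  induction P with
  | nil => simp [forwardWeight]
  | cons a P ih =>
    simp only [List.cons_append, forwardWeight, List.map_append, List.sum_append, List.map_cons,
      List.sum_cons, ih]
    ring

theorem arcWeight_eq_add_mul_score (a u : V) :
    arcWeight A ω a u = arcWeight A ω u a + ω a * score A ω a u := by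
  unfold arcWeight score
  split_ifs <;> ring

namespace IsMedianOrder

theorem of_append_left {P Q : List V} (h : IsMedianOrder A ω (P ++ Q)) :
    IsMedianOrder A ω P := by
  intro P' hP'
  have := h (P' ++ Q) (hP'.append_right Q)
  rw [forwardWeight_append, forwardWeight_append, (hP'.map _).sum_eq] at this
  linarith

theorem of_append_right {P Q : List V} (h : IsMedianOrder A ω (P ++ Q)) :
    IsMedianOrder A ω Q := by
  intro Q' hQ'
  have := h (P ++ Q') (hQ'.append_left P)
  rw [forwardWeight_append, forwardWeight_append] at this
  simp only [(hQ'.map _).sum_eq] at this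
  linarith

/-- Moving `w` to the front changes the forward weight by `ω w` times this sum. -/
theorem sum_score_nonpos {P : List V} {w : V} (h : IsMedianOrder A ω (P ++ [w]))
    (hw : 0 < ω w) : (P.map (score A ω w)).sum ≤ 0 := by
  have hle := h (w :: P) (List.perm_append_singleton w P).symm
  have hsplit : (P.map (arcWeight A ω w)).sum =
      (P.map fun p => arcWeight A ω p w).sum + ω w * (P.map (score A ω w)).sum := by
    simp only [← List.sum_map_mul_left, ← List.sum_map_add, ← arcWeight_eq_add_mul_score]
  simp only [forwardWeight, forwardWeight_append, List.map_cons, List.map_nil, List.sum_cons,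
    List.sum_nil, add_zero] at hle
  nlinarith

end IsMedianOrder

theorem exists_isMedianOrder (l : List V) : ∃ m, m.Perm l ∧ IsMedianOrder A ω m := by
  obtain ⟨m, hm, hmax⟩ := l.permutations.toFinset.exists_max_image (forwardWeight A ω)
    ⟨l, List.mem_toFinset.2 (List.mem_permutations.2 (List.Perm.refl l))⟩
  rw [List.mem_toFinset, List.mem_permutations] at hm
  exact ⟨m, hm, fun m' hm' =>
    hmax m' (List.mem_toFinset.2 (List.mem_permutations.2 (hm'.trans hm)))⟩

namespace Shadow

variable {s t : Set V} {x w : V}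

theorem anti (hst : s ⊆ t) (h : Shadow A t x w) : Shadow A s x w :=
  ⟨h.1, fun u hu => h.2.1 u (hst hu), fun u hu => h.2.2 u (hst hu)⟩

theorem ite_anti (hst : s ⊆ t) (hω : 0 ≤ ω w) :
    (if Shadow A t x w then ω w else 0) ≤ if Shadow A s x w then ω w else 0 := by
  split_ifs with ht hs
  · rfl
  · exact absurd (ht.anti hst) hs
  · exact hω
  · rfl

theorem score_le (h : Shadow A s x w) {u : V} (hu : u ∈ s) (hω : 0 ≤ ω u) :
    score A ω x u ≤ score A ω w u := by
  have hout := h.2.1 u hu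
  have hin := h.2.2 u hu
  unfold score
  split_ifs <;> first | linarith | tauto

theorem score_eq_neg (hA : A w w) (hw : w ∈ s) (h : Shadow A s x w) :
    score A ω x w = -ω w := by
  simp [score, h.1, h.2.2 w hw hA]

end Shadow

/-- Split at the first shadow vertex `w`: the vertices before `w` score against `x` at most as
against `w`, hence non-positively; `w` itself contributes `-ω w + ω w = 0`; the vertices after
`w` are handled by induction, since a suffix of a median order is a median order. -/
theorem IsMedianOrder.sum_score_add_shadow_nonpos (hA : ∀ v, A v v) (l : List V) (x : V)
    (hpos : ∀ v ∈ l ++ [x], 0 < ω v) (hmed : IsMedianOrder A ω (l ++ [x])) :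
    (l.map fun u =>
      score A ω x u + if Shadow A {v | v ∈ l ++ [x]} x u then ω u else 0).sum ≤ 0 := by
  cases hfind : l.find? (fun u => decide (Shadow A {v | v ∈ l ++ [x]} x u)) with
  | none =>
    rw [List.find?_eq_none] at hfind
    calc _ = (l.map (score A ω x)).sum := by
          congr 1
          refine List.map_congr_left fun u hu => ?_
          rw [if_neg (by simpa using hfind u hu), add_zero]
      _ ≤ 0 := hmed.sum_score_nonpos (hpos x (by simp))
  | some w =>
    obtain ⟨hw, P, T, rfl, hP⟩ := List.find?_eq_some_iff_append.1 hfind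
    set s : Set V := {v | v ∈ P ++ w :: T ++ [x]}
    have hw : Shadow A s x w := by simpa using hw
    have hmed' : IsMedianOrder A ω (P ++ [w] ++ (T ++ [x])) := by simpa using hmed
    have hPsum : (P.map fun u => score A ω x u + if Shadow A s x u then ω u else 0).sum ≤ 0 :=
      calc _ = (P.map (score A ω x)).sum := by
            congr 1
            refine List.map_congr_left fun u hu => ?_
            rw [if_neg (by simpa using hP u hu), add_zero]
        _ ≤ (P.map (score A ω w)).sum := List.sum_le_sum fun u hu =>
            hw.score_le (by simp [s, hu]) (hpos u (by simp [hu])).le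
        _ ≤ 0 := hmed'.of_append_left.sum_score_nonpos (hpos w (by simp))
    have hwterm : score A ω x w + (if Shadow A s x w then ω w else 0) = 0 := by
      rw [if_pos hw, hw.score_eq_neg (hA w) (by simp [s])]
      ring
    have hTsum : (T.map fun u => score A ω x u + if Shadow A s x u then ω u else 0).sum ≤ 0 :=
      calc _ ≤ (T.map fun u =>
              score A ω x u + if Shadow A {v | v ∈ T ++ [x]} x u then ω u else 0).sum :=
            List.sum_le_sum fun u hu => add_le_add le_rfl <|
              Shadow.ite_anti (fun v hv => by simp only [s, Set.mem_ofPred_eq] at hv ⊢; simp_all)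
                (hpos u (by simp [hu])).le
        _ ≤ 0 := sum_score_add_shadow_nonpos hA T x
            (fun v hv => hpos v (by simp at hv ⊢; tauto)) hmed'.of_append_right
    simp only [List.map_append, List.map_cons, List.sum_append, List.sum_cons]
    linarith
termination_by l.length
decreasing_by subst_vars; simp only [List.length_append, List.length_cons]; omega

theorem shadow_univ_iff_not_rprod {B : V → V → Prop} (hB : ∀ u v, B v u ↔ u = v ∨ ¬ A u v)
    {x w : V} : Shadow A Set.univ x w ↔ ¬ (rprod A B x w ∨ rprod B A x w) := by
  simp only [Shadow, rprod, hB, Set.mem_univ, true_imp_iff]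
  constructor
  · rintro ⟨hxw, hout, hin⟩ (⟨u, hxu, rfl | hwu⟩ | ⟨u, rfl | hux, huw⟩)
    exacts [hxw hxu, hwu (hout u hxu), hxw huw, hux (hin u huw)]
  · intro h
    simp only [not_or, not_exists, not_and, not_not] at h
    exact ⟨fun hxw => (h.1 w hxw).1 rfl, fun u hxu => (h.1 u hxu).2,
      fun u huw => by_contra fun hux => h.2 u (Or.inr hux) huw⟩

variable [Fintype V]

theorem exists_wt_outs_add_wt_shadow_le_wt_ins [Nonempty V] (hA : ∀ v, A v v)
    (hω : ∀ v, 0 ≤ ω v) :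
    ∃ x, wt ω (outs A x) + wt ω (outs (Shadow A Set.univ) x) ≤ wt ω (ins A x) := by
  suffices ∃ x, ∑ u, (score A ω x u + if Shadow A Set.univ x u then ω u else 0) ≤ 0 by
    obtain ⟨x, hx⟩ := this
    refine ⟨x, ?_⟩
    simp only [wt, outs, ins, Finset.sum_filter, score, Finset.sum_add_distrib,
      Finset.sum_sub_distrib] at hx ⊢
    linarith
  by_cases hzero : ∀ v, ω v = 0
  · exact ⟨Classical.arbitrary V, by simp [score, hzero]⟩
  push Not at hzero
  obtain ⟨m, hmS, hmed⟩ :=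
    exists_isMedianOrder (A := A) (ω := ω) (Finset.univ.filter fun v => 0 < ω v).toList
  have hmem : ∀ v, v ∈ m ↔ 0 < ω v := by simp [hmS.mem_iff]
  obtain ⟨l, x, rfl⟩ : ∃ l x, m = l ++ [x] := by
    obtain ⟨v, hv⟩ := hzero
    rcases m.eq_nil_or_concat with hm | hm
    · simpa [hm] using (hmem v).2 ((hω v).lt_of_ne' hv)
    · simpa using hm
  have hnodup : (l ++ [x]).Nodup := hmS.nodup_iff.2 (Finset.nodup_toList _)
  refine ⟨x, ?_⟩
  calc ∑ u, (score A ω x u + if Shadow A Set.univ x u then ω u else 0)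
      = ∑ u ∈ l.toFinset, (score A ω x u + if Shadow A Set.univ x u then ω u else 0) := by
        refine (Finset.sum_subset (Finset.subset_univ _) fun u _ hu => ?_).symm
        by_cases hux : u = x
        · simp [hux, score, Shadow, hA x]
        · have hωu : ω u = 0 := by
            have := (hmem u).not.1 (by simp_all)
            exact le_antisymm (not_lt.1 this) (hω u)
          simp [score, hωu]
    _ = (l.map fun u => score A ω x u + if Shadow A Set.univ x u then ω u else 0).sum :=
        List.sum_toFinset _ (List.nodup_append.1 hnodup).1
    _ ≤ (l.map fun u =>
          score A ω x u + if Shadow A {v | v ∈ l ++ [x]} x u then ω u else 0).sum :=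
        List.sum_le_sum fun u _ => add_le_add le_rfl (Shadow.ite_anti (Set.subset_univ _) (hω u))
    _ ≤ 0 := hmed.sum_score_add_shadow_nonpos hA l x (fun v hv => (hmem v).1 hv)

end WeightedMedianOrder

open WeightedMedianOrder in
/-- Main theorem (tournament case of the generalised conjecture): if `A ∩ Bᵀ = I` and
`A ∪ Bᵀ = V × V`, then for every non-negative weight `ω` some vertex `v` satisfies
`ω((AB ∪ BA)(v)) ≥ ω(A(v)) + ω(B(v)) − ω(v)`. -/
theorem generalized_tournament_snc
    {V : Type} [Fintype V] [Nonempty V] (A B : V → V → Prop)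
    (h1 : ∀ u v, (A u v ∧ B v u) ↔ u = v)
    (h2 : ∀ u v, A u v ∨ B v u)
    (ω : V → ℝ) (hω : ∀ v, 0 ≤ ω v) :
    ∃ v, wt ω (outs (fun u w => rprod A B u w ∨ rprod B A u w) v) ≥
      wt ω (outs A v) + wt ω (outs B v) - ω v := by
  have hA : ∀ v, A v v := fun v => ((h1 v v).2 rfl).1
  have hB : ∀ u v, B v u ↔ u = v ∨ ¬ A u v := fun u v => by
    have := h1 u v
    have := h2 u v
    constructor
    · tauto
    · rintro (rfl | h)
      exacts [((h1 u u).2 rfl).2, by tauto]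
  obtain ⟨x, hx⟩ := exists_wt_outs_add_wt_shadow_le_wt_ins hA hω
  refine ⟨x, ?_⟩
  have hAB : ∑ u, ((if rprod A B x u ∨ rprod B A x u then ω u else 0) +
      if Shadow A Set.univ x u then ω u else 0) = ∑ u, ω u :=
    Finset.sum_congr rfl fun u _ => by
      by_cases h : rprod A B x u ∨ rprod B A x u <;> simp [h, shadow_univ_iff_not_rprod hB]
  have hBA : ∑ u, ((if B x u then ω u else 0) + if A u x then ω u else 0) =
      ∑ u, (ω u + if u = x then ω u else 0) :=
    Finset.sum_congr rfl fun u _ => by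
      by_cases hux : u = x
      · simp [hux, hA, hB]
      · by_cases h : A u x <;> simp [hux, h, hB]
  simp only [Finset.sum_add_distrib, Finset.sum_ite_eq', Finset.mem_univ, if_true] at hAB hBA
  simp only [wt, outs, ins, Finset.sum_filter] at hx ⊢
  linarith
end
end

section
/- Let A, B be directed graphs on a finite vertex set V with A ∩ Bᵀ = I, A ∪ Bᵀ = V × V, and A ⊆ B. Let G be the oriented graph with edge set {(u,v) : u ≠ v, (u,v) ∈ A}, and let l be a losing density of G. For a fixed vertex v, let C = AB ∪ BA, S₁ = Aᵀ(v) \ {v}, S₂ = Cᵀ(v) \ Bᵀ(v). Then l(S₂) ≥ l(S₁). -/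
open Finset
open scoped Classical
noncomputable section

/-- Key lemma of the main proof: in the tournament setting with `A ⊆ B`, for a losing
density `l` of `G = {(u,w) : u ≠ w, (u,w) ∈ A}` and any vertex `v`, with
`C = AB ∪ BA`, `S₁ = Aᵀ(v) \ {v}`, `S₂ = Cᵀ(v) \ Bᵀ(v)`, one has `l(S₂) ≥ l(S₁)`. -/
theorem losing_density_S2_ge_S1
    {V : Type} [Fintype V] (A B : V → V → Prop)
    (h1 : ∀ u v, (A u v ∧ B v u) ↔ u = v)
    (h2 : ∀ u v, A u v ∨ B v u)
    (hAB : ∀ u v, A u v → B u v)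
    (l : V → ℝ) (hl0 : ∀ v, 0 ≤ l v) (hl1 : ∑ v, l v = 1)
    (hld : ∀ v, wt l (outs (fun u w => u ≠ w ∧ A u w) v) ≥
                wt l (ins (fun u w => u ≠ w ∧ A u w) v))
    (hld' : ∀ v, 0 < l v → wt l (outs (fun u w => u ≠ w ∧ A u w) v) =
                wt l (ins (fun u w => u ≠ w ∧ A u w) v))
    (v : V) :
    wt l (ins (fun u w => rprod A B u w ∨ rprod B A u w) v \ ins B v) ≥
      wt l ((ins A v).erase v) := by
  classical
  have hArefl : ∀ x, A x x := fun x => ((h1 x x).mpr rfl).1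
  have hBrefl : ∀ x, B x x := fun x => ((h1 x x).mpr rfl).2
  set Gr : V → V → Prop := fun u w => u ≠ w ∧ A u w with hGr
  set Cr : V → V → Prop := fun u w => rprod A B u w ∨ rprod B A u w with hCr
  set P : Finset V := outs Gr v with hP
  set M : Finset V := ins Gr v with hM
  set T : Finset V := P.filter (fun u => ¬ Cr u v) with hTdef
  have hmemP : ∀ u, u ∈ P ↔ (v ≠ u ∧ A v u) := by
    intro u; simp [hP, outs, hGr]
  have hmemM : ∀ u, u ∈ M ↔ (u ≠ v ∧ A u v) := by
    intro u; simp [hM, ins, hGr]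
  have hmemT : ∀ u, u ∈ T ↔ ((v ≠ u ∧ A v u) ∧ ¬ Cr u v) := by
    intro u; rw [hTdef, Finset.mem_filter, hmemP]
  have hTP : T ⊆ P := Finset.filter_subset _ _
  -- rewrite S₂
  have hS2 : ins Cr v \ ins B v = P \ T := by
    ext u
    simp only [Finset.mem_sdiff, ins, Finset.mem_filter, Finset.mem_univ, true_and,
      hmemP, hmemT]
    constructor
    · rintro ⟨hc, hb⟩
      have hu : u ≠ v := by rintro rfl; exact hb (hBrefl u)
      have hav : A v u := by
        rcases h2 v u with h | h
        · exact h
        · exact absurd h hb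
      exact ⟨⟨Ne.symm hu, hav⟩, fun h => (h.2 hc)⟩
    · rintro ⟨⟨hvu, hav⟩, hnt⟩
      have hc : Cr u v := by
        by_contra hc
        exact hnt ⟨⟨hvu, hav⟩, hc⟩
      refine ⟨hc, fun hb => ?_⟩
      exact hvu ((h1 v u).mp ⟨hav, hb⟩)
  -- rewrite S₁
  have hS1 : (ins A v).erase v = M := by
    ext u
    simp only [Finset.mem_erase, ins, Finset.mem_filter, Finset.mem_univ, true_and, hmemM]
  rw [hS2, hS1]
  -- key subset facts for bad vertices
  have hsubP : ∀ u ∈ T, outs Gr u ⊆ P := by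
    intro u hu w hw
    obtain ⟨⟨hvu, hav⟩, hnc⟩ := (hmemT u).mp hu
    simp only [outs, Finset.mem_filter, Finset.mem_univ, true_and, hGr] at hw
    have hnb : ¬ B w v := fun hb => hnc (Or.inl ⟨w, hw.2, hb⟩)
    have hwv : w ≠ v := by rintro rfl; exact hnb (hBrefl w)
    have havw : A v w := by
      rcases h2 v w with h | h
      · exact h
      · exact absurd h hnb
    exact (hmemP w).mpr ⟨Ne.symm hwv, havw⟩
  have hMsub : ∀ u ∈ T, M ⊆ ins Gr u \ T := by
    intro u hu w hw
    obtain ⟨⟨hvu, hav⟩, hnc⟩ := (hmemT u).mp hu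
    obtain ⟨hwv, hawv⟩ := (hmemM w).mp hw
    rw [Finset.mem_sdiff]
    constructor
    · have hnb : ¬ B u w := fun hb => hnc (Or.inr ⟨w, hb, hawv⟩)
      have hwu : w ≠ u := by rintro rfl; exact hnb (hBrefl _)
      have hawu : A w u := by
        rcases h2 w u with h | h
        · exact h
        · exact absurd h hnb
      simp only [ins, Finset.mem_filter, Finset.mem_univ, true_and, hGr]
      exact ⟨hwu, hawu⟩
    · intro hwT
      obtain ⟨⟨hvw, havw⟩, _⟩ := (hmemT w).mp hwT
      exact hwv ((h1 w v).mp ⟨hawv, hAB v w havw⟩)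
  -- the zero sum from the losing-density equality
  have hzero : ∑ u ∈ T, l u * (wt l (outs Gr u) - wt l (ins Gr u)) = 0 := by
    refine Finset.sum_eq_zero fun u _ => ?_
    rcases eq_or_lt_of_le (hl0 u) with h | h
    · rw [← h]; ring
    · rw [hld' u h]; ring
  -- split into T and non-T parts
  have hsplit_out : ∀ u, wt l (outs Gr u) = wt l (outs Gr u ∩ T) + wt l (outs Gr u \ T) := by
    intro u; simp only [wt]; rw [Finset.sum_inter_add_sum_sdiff]
  have hsplit_in : ∀ u, wt l (ins Gr u) = wt l (ins Gr u ∩ T) + wt l (ins Gr u \ T) := by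
    intro u; simp only [wt]; rw [Finset.sum_inter_add_sum_sdiff]
  -- cancellation of within-T terms
  have ho : ∀ u, outs Gr u ∩ T = T.filter (fun w => Gr u w) := by
    intro u; ext w
    simp [outs, Finset.mem_inter, Finset.mem_filter, and_comm]
  have hi : ∀ u, ins Gr u ∩ T = T.filter (fun w => Gr w u) := by
    intro u; ext w
    simp [ins, Finset.mem_inter, Finset.mem_filter, and_comm]
  have hcancel : ∑ u ∈ T, l u * wt l (outs Gr u ∩ T) = ∑ u ∈ T, l u * wt l (ins Gr u ∩ T) := by
    calc ∑ u ∈ T, l u * wt l (outs Gr u ∩ T)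
        = ∑ u ∈ T, ∑ w ∈ T, (if Gr u w then l u * l w else 0) := by
          refine Finset.sum_congr rfl fun u _ => ?_
          rw [ho u]
          simp only [wt, Finset.sum_filter, Finset.mul_sum, mul_ite, mul_zero]
      _ = ∑ w ∈ T, ∑ u ∈ T, (if Gr u w then l u * l w else 0) := Finset.sum_comm
      _ = ∑ u ∈ T, l u * wt l (ins Gr u ∩ T) := by
          refine Finset.sum_congr rfl fun w _ => ?_
          rw [hi w]
          simp only [wt, Finset.sum_filter, Finset.mul_sum, mul_ite, mul_zero]
          exact Finset.sum_congr rfl fun u _ => by split <;> ring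
  have hzero2 : ∑ u ∈ T, l u * (wt l (outs Gr u \ T) - wt l (ins Gr u \ T)) = 0 := by
    have hexp : ∑ u ∈ T, l u * (wt l (outs Gr u) - wt l (ins Gr u))
        = (∑ u ∈ T, l u * wt l (outs Gr u ∩ T) - ∑ u ∈ T, l u * wt l (ins Gr u ∩ T))
          + ∑ u ∈ T, l u * (wt l (outs Gr u \ T) - wt l (ins Gr u \ T)) := by
      rw [← Finset.sum_sub_distrib, ← Finset.sum_add_distrib]
      refine Finset.sum_congr rfl fun u _ => ?_
      rw [hsplit_out u, hsplit_in u]; ring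
    rw [hzero, hcancel] at hexp
    linarith
  -- per-term bound
  have hbound : ∀ u ∈ T, l u * (wt l (outs Gr u \ T) - wt l (ins Gr u \ T))
      ≤ l u * (wt l (P \ T) - wt l M) := by
    intro u hu
    have hb1 : wt l (outs Gr u \ T) ≤ wt l (P \ T) := by
      refine Finset.sum_le_sum_of_subset_of_nonneg ?_ fun i _ _ => hl0 i
      exact Finset.sdiff_subset_sdiff (hsubP u hu) le_rfl
    have hb2 : wt l M ≤ wt l (ins Gr u \ T) := by
      refine Finset.sum_le_sum_of_subset_of_nonneg (hMsub u hu) fun i _ _ => hl0 i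
    have := hl0 u
    nlinarith
  have hmain : 0 ≤ wt l T * (wt l (P \ T) - wt l M) := by
    have h := Finset.sum_le_sum hbound
    rw [hzero2] at h
    rw [← Finset.sum_mul] at h
    exact h
  have hTnn : 0 ≤ wt l T := Finset.sum_nonneg fun i _ => hl0 i
  rcases eq_or_lt_of_le hTnn with hT0 | hTpos
  · -- T has zero weight
    have hPsum : wt l (P \ T) + wt l T = wt l P := by
      simp only [wt]; exact Finset.sum_sdiff hTP
    have hPM : wt l P ≥ wt l M := hld v
    have : wt l (P \ T) = wt l P := by rw [← hPsum, ← hT0]; ring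
    linarith
  · nlinarith
end
end

section
/- Every finite tournament T has a vertex v with |N⁺⁺(v)| ≥ |N⁺(v)|. This follows from the generalized theorem by setting A = B = {(u,v) : u = v or (u,v) ∈ E(T)} and ω ≡ 1. -/
open Finset
open scoped Classical
noncomputable section

/-!
Havet–Thomassé: let `v` be the last vertex of a median order, i.e. an ordering of the vertices
maximizing the number of forward arcs. Cut the order at the vertices outside
`N⁺(v) ∪ N⁺⁺(v)`, `v` itself being the last cut point. A cut point `z` dominates every
out-neighbour of `v` in the block before it (otherwise `z ∈ N⁺⁺(v)`), so the vertices of that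
block dominating `z` lie in `N⁺⁺(v)`. Moving `z` in front of its block cannot increase the
number of forward arcs, so `z` dominates at most as many vertices of the block as dominate it;
hence every block contains at least as many vertices of `N⁺⁺(v)` as of `N⁺(v)`.
-/

namespace MedianOrder

variable {α : Type} (r : α → α → Prop)

def forwardCount : List α → ℕ
  | [] => 0
  | x :: xs => xs.countP (r x ·) + forwardCount xs

def crossCount (xs ys : List α) : ℕ :=
  (xs.map fun x => ys.countP (r x ·)).sum

def IsMedian (l : List α) : Prop :=
  ∀ m, m.Perm l → forwardCount r m ≤ forwardCount r l

@[simp]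
lemma forwardCount_singleton (x : α) : forwardCount r [x] = 0 := rfl

@[simp]
lemma crossCount_nil_left (ys : List α) : crossCount r [] ys = 0 := rfl

lemma crossCount_cons_left (x : α) (xs ys : List α) :
    crossCount r (x :: xs) ys = ys.countP (r x ·) + crossCount r xs ys := by
  simp [crossCount]

lemma crossCount_append_left (xs ys zs : List α) :
    crossCount r (xs ++ ys) zs = crossCount r xs zs + crossCount r ys zs := by
  simp [crossCount]

lemma crossCount_append_right (xs ys zs : List α) :
    crossCount r xs (ys ++ zs) = crossCount r xs ys + crossCount r xs zs := by
  induction xs with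
  | nil => rfl
  | cons x xs ih => simp only [crossCount_cons_left, ih, List.countP_append]; omega

lemma crossCount_singleton_right (xs : List α) (z : α) :
    crossCount r xs [z] = xs.countP (r · z) := by
  induction xs with
  | nil => rfl
  | cons x xs ih => simp [crossCount_cons_left, ih, List.countP_cons]; omega

lemma forwardCount_append (xs ys : List α) :
    forwardCount r (xs ++ ys) = forwardCount r xs + forwardCount r ys + crossCount r xs ys := by
  induction xs with
  | nil => simp [forwardCount]
  | cons x xs ih =>
    simp only [List.cons_append, forwardCount, ih, crossCount_cons_left, List.countP_append]
    omega

lemma exists_isMedian_perm (l₀ : List α) : ∃ l, l.Perm l₀ ∧ IsMedian r l := by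
  obtain ⟨l, hl, hmax⟩ := l₀.permutations.toFinset.exists_max_image (forwardCount r)
    ⟨l₀, by simp⟩
  rw [List.mem_toFinset, List.mem_permutations] at hl
  exact ⟨l, hl, fun m hm => hmax m (by simpa using hm.trans hl)⟩

/-- Moving `z` in front of `b` gives a permutation of `l`, so it cannot gain forward pairs. -/
lemma IsMedian.countP_le {l a b c : List α} {z : α} (hl : IsMedian r l)
    (hsplit : l = a ++ b ++ z :: c) : b.countP (r z ·) ≤ b.countP (r · z) := by
  have hperm : (a ++ [z] ++ b ++ c).Perm l := by
    rw [hsplit]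
    simp only [List.append_assoc, List.cons_append, List.nil_append]
    exact List.perm_middle.symm.append_left a
  have h := hl _ hperm
  rw [hsplit, show z :: c = [z] ++ c from rfl] at h
  simp only [forwardCount_append, forwardCount_singleton, crossCount_append_left,
    crossCount_append_right, crossCount_singleton_right, crossCount_cons_left,
    crossCount_nil_left, List.countP_append] at h
  omega

end MedianOrder

theorem List.countP_le_countP_of_blocks {α : Type} {f g : α → Bool} (s : List α)
    (hlast : ∀ x ∈ s.getLast?, f x = false ∧ g x = false)
    (hblock : ∀ a b z c, s = a ++ b ++ z :: c → (∀ x ∈ b, f x ∨ g x) →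
      f z = false → g z = false → b.countP f ≤ b.countP g) :
    s.countP f ≤ s.countP g := by
  suffices key : ∀ t a b, s = a ++ b ++ t → (∀ x ∈ b, f x ∨ g x) →
      (b ++ t).countP f ≤ (b ++ t).countP g from key s [] [] rfl (by simp)
  intro t
  induction t with
  | nil =>
    intro a b hs hb
    rcases b.eq_nil_or_concat with rfl | ⟨b', y, rfl⟩
    · simp
    · obtain ⟨hfy, hgy⟩ := hlast y (by simp [hs])
      simpa [hfy, hgy] using hb y (by simp)
  | cons z t ih =>
    intro a b hs hb
    by_cases hz : f z ∨ g z
    · simpa using ih a (b ++ [z]) (by simp [hs]) (by simpa [or_imp, forall_and] using ⟨hb, hz⟩)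
    · simp only [not_or, Bool.not_eq_true] at hz
      have hb' := hblock a b z t hs hb hz.1 hz.2
      have ht := ih (a ++ b ++ [z]) [] (by simp [hs]) (by simp)
      simp only [List.countP_append, List.countP_cons, hz.1, hz.2, List.nil_append] at ht ⊢
      simp only [Bool.false_eq_true, ↓reduceIte, add_zero]
      omega

section Tournament

open MedianOrder

variable {V : Type} [Fintype V] {T : V → V → Prop} {v x z : V}

lemma mem_outs : x ∈ outs T v ↔ T v x := by
  simp [outs]

lemma mem_souts : x ∈ souts T v ↔ (∃ u, T v u ∧ T u x) ∧ ¬ T v x := by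
  simp [souts, outs]

lemma notMem_outs_self (hT1 : ∀ u v, T u v → ¬ T v u) (v : V) : v ∉ outs T v :=
  fun h => hT1 v v (mem_outs.1 h) (mem_outs.1 h)

lemma notMem_souts_self (hT1 : ∀ u v, T u v → ¬ T v u) (v : V) : v ∉ souts T v := by
  intro h
  obtain ⟨⟨u, hvu, huv⟩, -⟩ := mem_souts.1 h
  exact hT1 u v huv hvu

lemma rel_of_notMem_outs_of_notMem_souts (hT2 : ∀ u v, u ≠ v → T u v ∨ T v u)
    (hz : z ∉ outs T v) (hz' : z ∉ souts T v) (hx : x ∈ outs T v) : T z x := by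
  have hxz : ¬ T x z := fun hxz =>
    hz' (mem_souts.2 ⟨⟨x, mem_outs.1 hx, hxz⟩, mem_outs.not.1 hz⟩)
  have hne : x ≠ z := by rintro rfl; exact hz hx
  exact (hT2 x z hne).resolve_left hxz

lemma MedianOrder.IsMedian.countP_outs_le_countP_souts (hT1 : ∀ u v, T u v → ¬ T v u)
    (hT2 : ∀ u v, u ≠ v → T u v ∨ T v u) {l a b c : List V} (hl : IsMedian T l)
    (hsplit : l = a ++ b ++ z :: c) (hb : ∀ x ∈ b, x ∈ outs T v ∨ x ∈ souts T v)
    (hz : z ∉ outs T v) (hz' : z ∉ souts T v) :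
    b.countP (· ∈ outs T v) ≤ b.countP (· ∈ souts T v) := by
  have hdom : ∀ x, x ∈ outs T v → T z x :=
    fun x => rel_of_notMem_outs_of_notMem_souts hT2 hz hz'
  calc b.countP (· ∈ outs T v)
      ≤ b.countP (T z ·) := List.countP_mono_left fun x _ hx => by
        simpa using hdom x (by simpa using hx)
    _ ≤ b.countP (T · z) := hl.countP_le T hsplit
    _ ≤ b.countP (· ∈ souts T v) := List.countP_mono_left fun x hxb hxz => by
        simp only [decide_eq_true_eq] at hxz ⊢
        exact (hb x hxb).resolve_left fun hx => hT1 z x (hdom x hx) hxz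

lemma card_eq_countP_of_perm_toList {l : List V} (hl : l.Perm Finset.univ.toList)
    (S : Finset V) : S.card = l.countP (· ∈ S) := by
  rw [← Multiset.coe_countP, Multiset.coe_eq_coe.2 hl, Finset.coe_toList,
    Multiset.countP_eq_card_filter, ← Finset.filter_val, ← Finset.card_def,
    Finset.filter_mem_eq_inter, Finset.univ_inter]

end Tournament

/-- Fisher's theorem: every finite tournament has a vertex `v` with `|N⁺⁺(v)| ≥ |N⁺(v)|`. -/
theorem tournament_snc
    {V : Type} [Fintype V] [Nonempty V] (T : V → V → Prop)
    (hT1 : ∀ u v, T u v → ¬ T v u)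
    (hT2 : ∀ u v, u ≠ v → T u v ∨ T v u) :
    ∃ v, (souts T v).card ≥ (outs T v).card := by
  obtain ⟨l, hperm, hmed⟩ := MedianOrder.exists_isMedian_perm T Finset.univ.toList
  have hne : l ≠ [] := by
    rintro rfl
    exact Finset.univ_nonempty.ne_empty (Finset.toList_eq_nil.1 hperm.symm.eq_nil)
  refine ⟨l.getLast hne, ?_⟩
  rw [ge_iff_le, card_eq_countP_of_perm_toList hperm, card_eq_countP_of_perm_toList hperm]
  apply l.countP_le_countP_of_blocks
  · intro x hx
    rw [List.getLast?_eq_some_getLast hne, Option.mem_some_iff] at hx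
    subst hx
    simp [notMem_outs_self hT1, notMem_souts_self hT1]
  · intro a b z c hs hb hz hz'
    simp only [decide_eq_true_eq, decide_eq_false_iff_not] at hb hz hz'
    exact hmed.countP_outs_le_countP_souts hT1 hT2 hs hb hz hz'
end
end

section
/- In the tournament setting with A ⊆ B, A ∩ Bᵀ = I, A ∪ Bᵀ = V × V, fix a vertex v and let C = AB ∪ BA, Q = (V \ Cᵀ(v)) ∪ {v}. If u ∈ Q with u ≠ v and x ∈ Bᵀ(v) \ Aᵀ(v), then (x,u) ∉ Aᵀ; consequently, with G = {(p,q) : p ≠ q, (p,q) ∈ A}, one has N_G⁺(u) ⊆ N_Q⁺(u) ∪ (Cᵀ(v) \ Bᵀ(v)), where N_Q⁺(u) = N_G⁺(u) ∩ Q. -/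
open Finset
open scoped Classical
noncomputable section

/-- In the tournament setting with `A ⊆ B`, for `u ∈ Q = (V \ Cᵀ(v)) ∪ {v}` with `u ≠ v`
and `x ∈ Bᵀ(v) \ Aᵀ(v)`: `(x,u) ∉ Aᵀ`; consequently
`N_G⁺(u) ⊆ N_Q⁺(u) ∪ (Cᵀ(v) \ Bᵀ(v))` where `N_Q⁺(u) = N_G⁺(u) ∩ Q`. -/
theorem out_neighbourhood_subset
    {V : Type} [Fintype V] (A B : V → V → Prop)
    (h1 : ∀ p q, (A p q ∧ B q p) ↔ p = q)
    (h2 : ∀ p q, A p q ∨ B q p)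
    (hAB : ∀ p q, A p q → B p q)
    (v u : V) (huv : u ≠ v)
    (huQ : ¬ (rprod A B u v ∨ rprod B A u v)) :
    (∀ x, B x v ∧ ¬ A x v → ¬ A u x) ∧
    outs (fun p q => p ≠ q ∧ A p q) u ⊆
      (outs (fun p q => p ≠ q ∧ A p q) u ∩
        ((Finset.univ.filter (fun q => ¬ (rprod A B q v ∨ rprod B A q v))) ∪ {v})) ∪
      (ins (fun p q => rprod A B p q ∨ rprod B A p q) v \ ins B v) := by
  constructor
  · rintro x ⟨hBx, -⟩ hAux
    exact huQ (Or.inl ⟨x, hAux, hBx⟩)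
  · intro q hq
    simp only [outs, ins, Finset.mem_filter, Finset.mem_univ, true_and] at hq
    obtain ⟨hne, hAuq⟩ := hq
    by_cases hC : rprod A B q v ∨ rprod B A q v
    · by_cases hBqv : B q v
      · exact absurd (Or.inl ⟨q, hAuq, hBqv⟩) huQ
      · refine Finset.mem_union_right _ ?_
        simp [ins, hC, hBqv]
    · refine Finset.mem_union_left _ (Finset.mem_inter.mpr ⟨?_, ?_⟩)
      · simp [outs, hne, hAuq]
      · exact Finset.mem_union_left _ (by simp only [Finset.mem_filter, Finset.mem_univ, true_and]; exact hC)
end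
end

section
/- Let A, B be directed graphs on a finite vertex set V with A ∩ Bᵀ = I and A ∪ Bᵀ = V × V (not assuming A ⊆ B). Setting A' = A ∩ B and B' = A ∪ B, the pair (A', B') also satisfies A' ∩ B'ᵀ = I and A' ∪ B'ᵀ = V × V, with A' ⊆ B'. Hence the tournament case of the generalized conjecture for pairs with A ⊆ B implies it for all tournament-like pairs. -/
open Finset
open scoped Classical
noncomputable section

/-- Reduction in the tournament-like case: with `A' = A ∩ B`, `B' = A ∪ B`, the pair
`(A', B')` satisfies `A' ∩ B'ᵀ = I`, `A' ∪ B'ᵀ = V × V` and `A' ⊆ B'`; hence the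
tournament case of the generalised conjecture for pairs with `A ⊆ B` implies it for all
tournament-like pairs. -/
theorem tournament_reduction_to_subset
    {V : Type} [Fintype V] (A B : V → V → Prop)
    (h1 : ∀ u v, (A u v ∧ B v u) ↔ u = v)
    (h2 : ∀ u v, A u v ∨ B v u) :
    (∀ u v, ((A u v ∧ B u v) ∧ (A v u ∨ B v u)) ↔ u = v) ∧
    (∀ u v, (A u v ∧ B u v) ∨ (A v u ∨ B v u)) ∧
    (∀ u v, (A u v ∧ B u v) → (A u v ∨ B u v)) ∧
    ((∀ (A' B' : V → V → Prop),
        (∀ u v, (A' u v ∧ B' v u) ↔ u = v) →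
        (∀ u v, A' u v ∨ B' v u) →
        (∀ u v, A' u v → B' u v) →
        ∃ v, (outs (fun u w => rprod A' B' u w ∨ rprod B' A' u w) v).card ≥
          (outs A' v).card + (outs B' v).card - 1) →
      ∃ v, (outs (fun u w => rprod A B u w ∨ rprod B A u w) v).card ≥
        (outs A v).card + (outs B v).card - 1) := by
  have loopA : ∀ v, A v v := fun v => ((h1 v v).mpr rfl).1
  have loopB : ∀ v, B v v := fun v => ((h1 v v).mpr rfl).2
  have c1 : ∀ u v, ((A u v ∧ B u v) ∧ (A v u ∨ B v u)) ↔ u = v := by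
    intro u v
    constructor
    · rintro ⟨⟨hA, hB⟩, hAB⟩
      rcases hAB with hAvu | hBvu
      · exact ((h1 v u).mp ⟨hAvu, hB⟩).symm
      · exact (h1 u v).mp ⟨hA, hBvu⟩
    · rintro rfl
      exact ⟨⟨loopA u, loopB u⟩, Or.inl (loopA u)⟩
  have c2 : ∀ u v, (A u v ∧ B u v) ∨ (A v u ∨ B v u) := by
    intro u v
    by_cases hAvu : A v u
    · exact Or.inr (Or.inl hAvu)
    by_cases hBvu : B v u
    · exact Or.inr (Or.inr hBvu)
    · left
      refine ⟨(h2 u v).resolve_right hBvu, (h2 v u).resolve_left hAvu⟩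
  refine ⟨c1, c2, fun u v h => Or.inl h.1, ?_⟩
  intro H
  obtain ⟨v, hv⟩ := H (fun u v => A u v ∧ B u v) (fun u v => A u v ∨ B u v)
    c1 c2 (fun u v h => Or.inl h.1)
  refine ⟨v, ?_⟩
  have hsub : outs (fun u w => rprod (fun u v => A u v ∧ B u v) (fun u v => A u v ∨ B u v) u w ∨
      rprod (fun u v => A u v ∨ B u v) (fun u v => A u v ∧ B u v) u w) v ⊆
      outs (fun u w => rprod A B u w ∨ rprod B A u w) v := by
    intro x hx
    simp only [outs, mem_filter, mem_univ, true_and] at hx ⊢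
    rcases hx with ⟨w, ⟨hA, hB⟩, hAB⟩ | ⟨w, hAB, hA, hB⟩
    · rcases hAB with h | h
      · exact Or.inr ⟨w, hB, h⟩
      · exact Or.inl ⟨w, hA, h⟩
    · rcases hAB with h | h
      · exact Or.inl ⟨w, h, hB⟩
      · exact Or.inr ⟨w, h, hA⟩
  have hcard : (outs (fun u v => A u v ∧ B u v) v).card +
      (outs (fun u v => A u v ∨ B u v) v).card = (outs A v).card + (outs B v).card := by
    have h1' : outs (fun u v => A u v ∧ B u v) v = outs A v ∩ outs B v := by
      ext x; simp [outs]
    have h2' : outs (fun u v => A u v ∨ B u v) v = outs A v ∪ outs B v := by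
      ext x; simp [outs]
    rw [h1', h2', add_comm, Finset.card_union_add_card_inter]
  calc (outs A v).card + (outs B v).card - 1
      = (outs (fun u v => A u v ∧ B u v) v).card +
        (outs (fun u v => A u v ∨ B u v) v).card - 1 := by rw [hcard]
    _ ≤ (outs (fun u w => rprod (fun u v => A u v ∧ B u v) (fun u v => A u v ∨ B u v) u w ∨
        rprod (fun u v => A u v ∨ B u v) (fun u v => A u v ∧ B u v) u w) v).card := hv
    _ ≤ _ := Finset.card_le_card hsub
end
end
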